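/- Let m be a strongly closed and coherent DBM of dimension 2n, let a,b ∈ {0,…,2n−1}, let d ∈ ℚ with m[b,a] + d ≥ 0, and write Q(i,j) = min( m[i,j], m[i,a]+d+m[b,j], m[i,b̄]+d+m[ā,j], m[i,b̄]+d+m[ā,a]+d+m[b,j], m[i,a]+d+m[b,b̄]+d+m[ā,j] ). Define m'[i,ī] = Q(i,ī) for all i. Then for all i,j: min( Q(i,j), (m'[i,ī] + m'[j̄,j])/2 ) = min( Q(i,j), (m[i,a]+d+m[b,ī]+m[j̄,j])/2, (m[i,ī]+m[j̄,a]+d+m[b,j])/2 ); that is, when the input DBM is strongly closed, the strengthening term built from updated key entries can be replaced by the two listed terms built from entries of m. -/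

import Mathlib

/-!
By coherence the updated diagonal entry `m'[i,ī]` is the least of `m[i,ī]`, `m[i,a]+d+m[b,ī]`,
`2m[i,b̄]+2d+m[ā,a]` and `2m[i,a]+2d+m[b,b̄]`, and likewise for `m'[j̄,j]`. After doubling, each
of the sixteen sums of a candidate for `m'[i,ī]` and one for `m'[j̄,j]` is either one of the two
listed terms, or dominates the sum of two of the five path lengths whose minimum is `m'[i,j]`:
directly, or after one use of strong closure of `m` (and, for two of them, of `m[b,a] + d ≥ 0`).
-/

namespace Octagon

/-- A DBM of dimension `2*n` with entries in `ℚ ∪ {+∞}`. -/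
abbrev DBM (n : ℕ) : Type := Fin (2 * n) → Fin (2 * n) → WithTop ℚ

/-- `bar i = i + 1` if `i` is even, `i - 1` if `i` is odd. -/
def bar {n : ℕ} (i : Fin (2 * n)) : Fin (2 * n) :=
  if h : (i : ℕ) % 2 = 0 then ⟨(i : ℕ) + 1, by have := i.isLt; omega⟩
  else ⟨(i : ℕ) - 1, by have := i.isLt; omega⟩

/-- A DBM is closed iff its diagonal is zero and it satisfies the triangle inequality. -/
def Closed {n : ℕ} (m : DBM n) : Prop :=
  (∀ i, m i i = 0) ∧ ∀ i j k, m i j ≤ m i k + m k j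

/-- A DBM is consistent iff its diagonal entries are nonnegative. -/
def Consistent {n : ℕ} (m : DBM n) : Prop :=
  ∀ i, 0 ≤ m i i

/-- A DBM is coherent iff `m[i,j] = m[bar j, bar i]` for all `i, j`. -/
def Coherent {n : ℕ} (m : DBM n) : Prop :=
  ∀ i j, m i j = m (bar j) (bar i)

/-- Incremental closure of `m` with the new constraint `x'_a - x'_b ≤ d`. -/
def IncClose {n : ℕ} (m : DBM n) (a b : Fin (2 * n)) (d : ℚ) : DBM n :=
  fun i j =>
    min (m i j) <|
    min (m i a + (d : WithTop ℚ) + m b j) <|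
    min (m i (bar b) + (d : WithTop ℚ) + m (bar a) j) <|
    min (m i (bar b) + (d : WithTop ℚ) + m (bar a) a + (d : WithTop ℚ) + m b j)
        (m i a + (d : WithTop ℚ) + m b (bar b) + (d : WithTop ℚ) + m (bar a) j)

/-- Halving on `ℚ ∪ {+∞}`, mapping `+∞` to `+∞`. -/
def halve : WithTop ℚ → WithTop ℚ := WithTop.map (fun x => x / 2)

/-- Strengthening of a DBM. -/
def Strengthen {n : ℕ} (m : DBM n) : DBM n :=
  fun i j => min (m i j) (halve (m i (bar i) + m (bar j) j))

-- Variables are named after DBM entries with the bars dropped: `ia` is `m[i,a]`, `bi` is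
-- `m[b,ī] = m[i,b̄]`, `ja` is `m[j̄,a] = m[ā,j]`, `ii` is `m[i,ī]`, `aa` is `m[ā,a]`, and so on.
theorem add_self_le_min_add_min_of_paths {M : Type*} [AddCommMonoid M] [LinearOrder M]
    [IsOrderedAddMonoid M] {ii jj aa bb ia bj bi ja ij ba d r : M}
    (h_ij : ij + ij ≤ ii + jj) (h_ia : ia + ia ≤ ii + aa) (h_bi : bi + bi ≤ ii + bb)
    (h_bj : bj + bj ≤ bb + jj) (h_ja : ja + ja ≤ aa + jj) (h_ba : ba + ba ≤ bb + aa)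
    (hd : 0 ≤ ba + d) (r_ij : r ≤ ij) (r_ab : r ≤ ia + d + bj) (r_ba : r ≤ bi + d + ja)
    (r_bab : r ≤ bi + d + aa + d + bj) (r_aba : r ≤ ia + d + bb + d + ja)
    (rA : r + r ≤ ia + d + bi + jj) (rB : r + r ≤ ii + ja + d + bj) :
    r + r ≤ min ii (min (ia + d + bi) (min (bi + d + aa + d + bi) (ia + d + bb + d + ia))) +
      min jj (min (ja + d + bj) (min (bj + d + aa + d + bj) (ja + d + bb + d + ja))) := by
  simp only [min_add, add_min, le_min_iff]
  refine ⟨⟨?_, ?_, ?_, ?_⟩, ⟨?_, ?_, ?_, ?_⟩, ⟨?_, ?_, ?_, ?_⟩, ⟨?_, ?_, ?_, ?_⟩⟩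
  · exact (add_le_add r_ij r_ij).trans h_ij
  · exact rA
  · calc r + r ≤ (bi + d + ja) + (bi + d + ja) := add_le_add r_ba r_ba
      _ = (ja + ja) + (bi + d + bi + d) := by abel
      _ ≤ (aa + jj) + (bi + d + bi + d) := by gcongr
      _ = (bi + d + aa + d + bi) + jj := by abel
  · calc r + r ≤ (ia + d + bj) + (ia + d + bj) := add_le_add r_ab r_ab
      _ = (bj + bj) + (ia + d + ia + d) := by abel
      _ ≤ (bb + jj) + (ia + d + ia + d) := by gcongr
      _ = (ia + d + bb + d + ia) + jj := by abel
  · exact rB.trans_eq (by abel)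
  · exact (add_le_add r_ab r_ba).trans_eq (by abel)
  · exact (add_le_add r_ba r_bab).trans_eq (by abel)
  · exact (add_le_add r_ab r_aba).trans_eq (by abel)
  · calc r + r ≤ (ia + d + bj) + (ia + d + bj) := add_le_add r_ab r_ab
      _ = (ia + ia) + (d + bj + d + bj) := by abel
      _ ≤ (ii + aa) + (d + bj + d + bj) := by gcongr
      _ = ii + (bj + d + aa + d + bj) := by abel
  · exact (add_le_add r_ab r_bab).trans_eq (by abel)
  · exact (add_le_add r_bab r_bab).trans_eq (by abel)
  · calc r + r ≤ (ia + d + bj) + (ia + d + bj) := add_le_add r_ab r_ab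
      _ ≤ (ia + d + bj) + (ia + d + bj) + ((ba + d) + (ba + d)) :=
        le_add_of_nonneg_right (add_nonneg hd hd)
      _ = (ba + ba) + (ia + d + bj + ia + d + bj + d + d) := by abel
      _ ≤ (bb + aa) + (ia + d + bj + ia + d + bj + d + d) := by gcongr
      _ = (ia + d + bb + d + ia) + (bj + d + aa + d + bj) := by abel
  · calc r + r ≤ (bi + d + ja) + (bi + d + ja) := add_le_add r_ba r_ba
      _ = (bi + bi) + (d + ja + d + ja) := by abel
      _ ≤ (ii + bb) + (d + ja + d + ja) := by gcongr
      _ = ii + (ja + d + bb + d + ja) := by abel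
  · exact (add_le_add r_ba r_aba).trans_eq (by abel)
  · calc r + r ≤ (bi + d + ja) + (bi + d + ja) := add_le_add r_ba r_ba
      _ ≤ (bi + d + ja) + (bi + d + ja) + ((ba + d) + (ba + d)) :=
        le_add_of_nonneg_right (add_nonneg hd hd)
      _ = (ba + ba) + (bi + d + ja + bi + d + ja + d + d) := by abel
      _ ≤ (bb + aa) + (bi + d + ja + bi + d + ja + d + d) := by gcongr
      _ = (bi + d + aa + d + bi) + (ja + d + bb + d + ja) := by abel
  · exact (add_le_add r_aba r_aba).trans_eq (by abel)

theorem bar_bar {n : ℕ} (i : Fin (2 * n)) : bar (bar i) = i := by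
  unfold bar
  split_ifs with h₁ h₂ h₂ <;> ext <;> simp only at h₂ ⊢ <;> omega

theorem Coherent.apply_bar_bar {n : ℕ} {m : DBM n} (hcoh : Coherent m) (i j : Fin (2 * n)) :
    m (bar i) (bar j) = m j i := by
  rw [hcoh, bar_bar, bar_bar]

theorem Coherent.apply_bar_right {n : ℕ} {m : DBM n} (hcoh : Coherent m) (i j : Fin (2 * n)) :
    m i (bar j) = m j (bar i) := by
  rw [hcoh, bar_bar]

theorem Coherent.apply_bar_left {n : ℕ} {m : DBM n} (hcoh : Coherent m) (i j : Fin (2 * n)) :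
    m (bar i) j = m (bar j) i := by
  rw [hcoh, bar_bar]

theorem le_halve_iff {x y : WithTop ℚ} : x ≤ halve y ↔ x + x ≤ y := by
  induction x <;> induction y <;> simp [halve, ← WithTop.coe_add]
  constructor <;> intro <;> linarith

theorem halve_add_halve (x : WithTop ℚ) : halve x + halve x = x := by
  induction x <;> simp [halve, ← WithTop.coe_add]

theorem halve_mono : Monotone halve := fun x _ h =>
  le_halve_iff.2 ((halve_add_halve x).trans_le h)

theorem add_self_le_of_le_halve_add_halve {n : ℕ} {m : DBM n}
    (hstrong : ∀ i j, m i j ≤ halve (m i (bar i)) + halve (m (bar j) j)) (i j : Fin (2 * n)) :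
    m i j + m i j ≤ m i (bar i) + m (bar j) j :=
  calc m i j + m i j
      ≤ (halve (m i (bar i)) + halve (m (bar j) j)) + (halve (m i (bar i)) + halve (m (bar j) j)) :=
        add_le_add (hstrong i j) (hstrong i j)
    _ = m i (bar i) + m (bar j) j := by rw [add_add_add_comm, halve_add_halve, halve_add_halve]

theorem IncClose_le {n : ℕ} (m : DBM n) (a b : Fin (2 * n)) (d : ℚ) (i j : Fin (2 * n)) :
    IncClose m a b d i j ≤ m i j :=
  min_le_left _ _

theorem IncClose_le_add_add {n : ℕ} (m : DBM n) (a b : Fin (2 * n)) (d : ℚ) (i j : Fin (2 * n)) :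
    IncClose m a b d i j ≤ m i a + d + m b j :=
  (min_le_right _ _).trans (min_le_left _ _)

theorem IncClose_apply_bar {n : ℕ} {m : DBM n} (hcoh : Coherent m) (a b : Fin (2 * n)) (d : ℚ)
    (k : Fin (2 * n)) :
    IncClose m a b d k (bar k) =
      min (m k (bar k)) (min (m k a + d + m b (bar k))
        (min (m b (bar k) + d + m (bar a) a + d + m b (bar k))
          (m k a + d + m b (bar b) + d + m k a))) := by
  unfold IncClose
  rw [hcoh.apply_bar_right k b, hcoh.apply_bar_bar a k,
    show m b (bar k) + d + m k a = m k a + d + m b (bar k) by abel,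
    ← min_assoc (m k a + d + m b (bar k)), min_self]

theorem halve_IncClose_diag_le {n : ℕ} (m : DBM n) (a b : Fin (2 * n)) (d : ℚ)
    (i j : Fin (2 * n)) :
    halve (IncClose m a b d i (bar i) + IncClose m a b d (bar j) j) ≤
      min (halve (m i a + (d : WithTop ℚ) + m b (bar i) + m (bar j) j))
        (halve (m i (bar i) + m (bar j) a + (d : WithTop ℚ) + m b j)) :=
  le_min
    (halve_mono (add_le_add (IncClose_le_add_add m a b d i (bar i)) (IncClose_le m a b d _ _)))
    (halve_mono ((add_le_add (IncClose_le m a b d _ _)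
      (IncClose_le_add_add m a b d (bar j) j)).trans_eq (by simp only [add_assoc])))

theorem le_halve_IncClose_diag {n : ℕ} {m : DBM n}
    (hstrong : ∀ i j, m i j ≤ halve (m i (bar i)) + halve (m (bar j) j))
    (hcoh : Coherent m) {a b : Fin (2 * n)} {d : ℚ} (hd : 0 ≤ m b a + (d : WithTop ℚ))
    (i j : Fin (2 * n)) :
    min (IncClose m a b d i j)
        (min (halve (m i a + (d : WithTop ℚ) + m b (bar i) + m (bar j) j))
             (halve (m i (bar i) + m (bar j) a + (d : WithTop ℚ) + m b j))) ≤
      halve (IncClose m a b d i (bar i) + IncClose m a b d (bar j) j) := by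
  set r := min (IncClose m a b d i j) _
  have hQ : r ≤ IncClose m a b d i j := min_le_left _ _
  have hA := le_halve_iff.1 ((min_le_right _ _).trans (min_le_left _ _) : r ≤ _)
  have hB := le_halve_iff.1 ((min_le_right _ _).trans (min_le_right _ _) : r ≤ _)
  simp only [IncClose, le_min_iff, hcoh.apply_bar_right i b, hcoh.apply_bar_left a j] at hQ
  obtain ⟨r_ij, r_ab, r_ba, r_bab, r_aba⟩ := hQ
  have hs := add_self_le_of_le_halve_add_halve hstrong
  have h_bi := hs i (bar b)
  have h_ja := hs (bar a) j
  rw [bar_bar, hcoh.apply_bar_right i b] at h_bi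
  rw [bar_bar, hcoh.apply_bar_left a j] at h_ja
  have hjj := IncClose_apply_bar hcoh a b d (bar j)
  rw [bar_bar] at hjj
  rw [le_halve_iff, IncClose_apply_bar hcoh, hjj]
  exact add_self_le_min_add_min_of_paths (hs i j) (hs i a) h_bi (hs b j) h_ja (hs b a) hd
    r_ij r_ab r_ba r_bab r_aba hA hB

theorem incStrongClose_reduce_general {n : ℕ} (m : DBM n)
    (hstrong : ∀ i j, m i j ≤ halve (m i (bar i)) + halve (m (bar j) j))
    (hcoh : Coherent m) (a b : Fin (2 * n)) (d : ℚ)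
    (hd : 0 ≤ m b a + (d : WithTop ℚ)) :
    ∀ i j,
      min (IncClose m a b d i j)
          (halve (IncClose m a b d i (bar i) + IncClose m a b d (bar j) j)) =
      min (IncClose m a b d i j)
          (min (halve (m i a + (d : WithTop ℚ) + m b (bar i) + m (bar j) j))
               (halve (m i (bar i) + m (bar j) a + (d : WithTop ℚ) + m b j))) := fun i j =>
  le_antisymm
    (min_le_min_left _ (halve_IncClose_diag_le m a b d i j))
    (le_min (min_le_left _ _) (le_halve_IncClose_diag hstrong hcoh hd i j))

/-- Theorem: when the input DBM is strongly closed and coherent and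
`m[b,a] + d ≥ 0`, the strengthening term built from the updated key entries
can be replaced by the two listed terms built from entries of `m`. -/
theorem incStrongClose_reduce {n : ℕ} (m : DBM n) (hcl : Closed m)
    (hstrong : ∀ i j, m i j ≤ halve (m i (bar i)) + halve (m (bar j) j))
    (hcoh : Coherent m) (a b : Fin (2 * n)) (d : ℚ)
    (hd : 0 ≤ m b a + (d : WithTop ℚ)) :
    ∀ i j,
      min (IncClose m a b d i j)
          (halve (IncClose m a b d i (bar i) + IncClose m a b d (bar j) j)) =
      min (IncClose m a b d i j)
          (min (halve (m i a + (d : WithTop ℚ) + m b (bar i) + m (bar j) j))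
               (halve (m i (bar i) + m (bar j) a + (d : WithTop ℚ) + m b j))) :=
  incStrongClose_reduce_general m hstrong hcoh a b d hd

end Octagon
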